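/- Let h: ℝ^d → (-∞,+∞] be a closed function of Legendre type and let g: ℝ^d → (-∞,+∞] be proper, closed, and convex. Let x̄ ∈ int(dom h) and suppose there is a unique point x⁺ = argmin_x { g(x) + D_h(x, x̄) } with x⁺ ∈ int(dom h) ∩ dom g. Then the infimal-convolution problem min_y { g*(y) + h*(∇h(x̄) − y) } has a solution y⁺, and ∇h(x⁺) + y⁺ = ∇h(x̄). -/

import Mathlib

open scoped RealInnerProductSpace
open Filter Topology

variable {d : ℕ}

def edom (φ : EuclideanSpace ℝ (Fin d) → EReal) : Set (EuclideanSpace ℝ (Fin d)) :=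
  {x | φ x ≠ ⊤}

noncomputable def fin (φ : EuclideanSpace ℝ (Fin d) → EReal) :
    EuclideanSpace ℝ (Fin d) → ℝ := fun x => (φ x).toReal

noncomputable def econj (ψ : EuclideanSpace ℝ (Fin d) → EReal) :
    EuclideanSpace ℝ (Fin d) → EReal := fun y =>
  ⨆ θ : EuclideanSpace ℝ (Fin d), (((⟪y, θ⟫ : ℝ) : EReal) - ψ θ)

def EssentiallySmooth (φ : EuclideanSpace ℝ (Fin d) → EReal) : Prop :=
  (interior (edom φ)).Nonempty ∧
  (∀ x ∈ interior (edom φ), DifferentiableAt ℝ (fin φ) x) ∧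
  (∀ (x : ℕ → EuclideanSpace ℝ (Fin d)) (x' : EuclideanSpace ℝ (Fin d)),
    (∀ k, x k ∈ interior (edom φ)) → Tendsto x atTop (𝓝 x') →
      x' ∈ frontier (edom φ) →
        Tendsto (fun k => ‖gradient (fin φ) (x k)‖) atTop atTop)

def LegendreType (φ : EuclideanSpace ℝ (Fin d) → EReal) : Prop :=
  EssentiallySmooth φ ∧ StrictConvexOn ℝ (interior (edom φ)) (fin φ)

/-- The (extended-real-valued) Bregman distance `D_h(x, x̄)`. -/
noncomputable def bregmanD (h : EuclideanSpace ℝ (Fin d) → EReal)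
    (x xbar : EuclideanSpace ℝ (Fin d)) : EReal :=
  h x - (((h xbar).toReal : ℝ) : EReal) -
    ((⟪gradient (fin h) xbar, x - xbar⟫ : ℝ) : EReal)

/-!
The point `x⁺` minimises `g + h - ⟪∇h(x̄), ·⟫` and `h` is differentiable there, so the
first-order optimality condition makes `y⁺ := ∇h(x̄) - ∇h(x⁺)` a subgradient of `g` at `x⁺`, while
`∇h(x⁺)` is a subgradient of `h` at `x⁺` by the gradient inequality. Fenchel–Young equality then
evaluates the dual objective at `y⁺` as `⟪∇h(x̄), x⁺⟫ - g(x⁺) - h(x⁺)`, and the Fenchel–Young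
inequality bounds the dual objective at every `y` below by this same number.
-/

section Gradient

variable {E : Type*} [NormedAddCommGroup E] [InnerProductSpace ℝ E]
  {f : E → ℝ} {s : Set E} {x z v : E}

lemma ConvexOn.apply_add_smul_sub_le (hf : ConvexOn ℝ s f) (hx : x ∈ s) (hz : z ∈ s) {t : ℝ}
    (ht₀ : 0 ≤ t) (ht₁ : t ≤ 1) : f (x + t • (z - x)) ≤ f x + t * (f z - f x) := by
  have := hf.2 hx hz (sub_nonneg.mpr ht₁) ht₀ (sub_add_cancel 1 t)
  rw [show (1 - t) • x + t • z = x + t • (z - x) by module, smul_eq_mul, smul_eq_mul] at this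
  linarith

variable [CompleteSpace E]

lemma tendsto_slope_inner_gradient (hf : DifferentiableAt ℝ f x) :
    Tendsto (fun t : ℝ => (f (x + t • v) - f x) / t) (𝓝[>] 0) (𝓝 ⟪gradient f x, v⟫) := by
  have hline : HasDerivAt (fun t : ℝ => x + t • v) v 0 := by
    simpa using ((hasDerivAt_id (0 : ℝ)).smul_const v).const_add x
  have hcomp : HasDerivAt (fun t : ℝ => f (x + t • v)) ⟪gradient f x, v⟫ 0 := by
    have hf' : HasFDerivAt f (fderiv ℝ f x) (x + (0 : ℝ) • v) := by simpa using hf.hasFDerivAt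
    rw [inner_gradient_left]
    exact hf'.comp_hasDerivAt 0 hline
  refine hcomp.tendsto_slope_zero_right.congr fun t => ?_
  simp [div_eq_inv_mul]

lemma inner_gradient_le_of_eventually_le {c : ℝ} (hf : DifferentiableAt ℝ f x)
    (h : ∀ᶠ t in 𝓝[>] 0, f (x + t • v) - f x ≤ t * c) : ⟪gradient f x, v⟫ ≤ c :=
  le_of_tendsto (tendsto_slope_inner_gradient hf) <| by
    filter_upwards [h, self_mem_nhdsWithin] with t ht ht0
    exact (div_le_iff₀' ht0).mpr ht

lemma le_inner_gradient_of_eventually_le {c : ℝ} (hf : DifferentiableAt ℝ f x)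
    (h : ∀ᶠ t in 𝓝[>] 0, t * c ≤ f (x + t • v) - f x) : c ≤ ⟪gradient f x, v⟫ :=
  ge_of_tendsto (tendsto_slope_inner_gradient hf) <| by
    filter_upwards [h, self_mem_nhdsWithin] with t ht ht0
    exact (le_div_iff₀' ht0).mpr ht

lemma ConvexOn.add_inner_gradient_le (hf : ConvexOn ℝ s f) (hx : x ∈ s) (hz : z ∈ s)
    (hfx : DifferentiableAt ℝ f x) : f x + ⟪gradient f x, z - x⟫ ≤ f z := by
  have := inner_gradient_le_of_eventually_le (v := z - x) (c := f z - f x) hfx <| by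
    filter_upwards [Ioo_mem_nhdsGT one_pos] with t ht
    linarith [hf.apply_add_smul_sub_le hx hz ht.1.le ht.2.le]
  linarith

/-- First-order optimality condition: `v - ∇ψ x` is a subgradient of `f` at `x`. -/
lemma ConvexOn.add_inner_le_of_isMinOn {ψ : E → ℝ} {t : Set E} (hf : ConvexOn ℝ s f)
    (hψ : DifferentiableAt ℝ ψ x) (hx : x ∈ s) (ht : t ∈ 𝓝 x)
    (hmin : IsMinOn (fun y => f y + ψ y - ⟪v, y⟫) (s ∩ t) x) (hz : z ∈ s) :
    f x + ⟪v - gradient ψ x, z - x⟫ ≤ f z := by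
  have hseg : ∀ᶠ τ in 𝓝[>] (0 : ℝ), x + τ • (z - x) ∈ t :=
    nhdsWithin_le_nhds <| (Continuous.tendsto (by fun_prop) 0).eventually_mem (by simpa using ht)
  have := le_inner_gradient_of_eventually_le (v := z - x) (c := f x - f z + ⟪v, z - x⟫) hψ <| by
    filter_upwards [hseg, Ioo_mem_nhdsGT one_pos] with τ hτt hτ
    have hmem := hf.1.add_smul_sub_mem hx hz ⟨hτ.1.le, hτ.2.le⟩
    have hle := hmin ⟨hmem, hτt⟩
    simp only [Set.mem_ofPred_eq, inner_add_right, real_inner_smul_right] at hle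
    nlinarith [hf.apply_add_smul_sub_le hx hz hτ.1.le hτ.2.le]
  rw [inner_sub_left]
  linarith

end Gradient

def ERealConvex (φ : EuclideanSpace ℝ (Fin d) → EReal) : Prop :=
  ∀ x y : EuclideanSpace ℝ (Fin d), ∀ a b : ℝ, 0 ≤ a → 0 ≤ b → a + b = 1 →
    φ (a • x + b • y) ≤ (a : EReal) * φ x + (b : EReal) * φ y

section Extended

variable {φ g h : EuclideanSpace ℝ (Fin d) → EReal} {x y v : EuclideanSpace ℝ (Fin d)}

lemma coe_fin_of_mem_edom (hφ : φ x ≠ ⊥) (hx : x ∈ edom φ) : (fin φ x : EReal) = φ x :=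
  EReal.coe_toReal hx hφ

lemma convexOn_fin (hφ : ∀ x, φ x ≠ ⊥) (hconv : ERealConvex φ) :
    ConvexOn ℝ (edom φ) (fin φ) := by
  have hle : ∀ ⦃x⦄, x ∈ edom φ → ∀ ⦃y⦄, y ∈ edom φ → ∀ ⦃a b : ℝ⦄, 0 ≤ a → 0 ≤ b → a + b = 1 →
      φ (a • x + b • y) ≤ ((a * fin φ x + b * fin φ y : ℝ) : EReal) := by
    intro x hx y hy a b ha hb hab
    simpa [coe_fin_of_mem_edom (hφ x) hx, coe_fin_of_mem_edom (hφ y) hy]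
      using hconv x y a b ha hb hab
  have hdom : Convex ℝ (edom φ) := fun x hx y hy a b ha hb hab =>
    ne_top_of_le_ne_top (EReal.coe_ne_top _) (hle hx hy ha hb hab)
  refine ⟨hdom, fun x hx y hy a b ha hb hab => ?_⟩
  have := hle hx hy ha hb hab
  rw [← coe_fin_of_mem_edom (hφ _) (hdom hx hy ha hb hab), EReal.coe_le_coe_iff] at this
  simpa using this

lemma inner_sub_le_econj (φ : EuclideanSpace ℝ (Fin d) → EReal) (x y : EuclideanSpace ℝ (Fin d)) :
    ((⟪y, x⟫ : ℝ) : EReal) - φ x ≤ econj φ y :=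
  le_iSup (fun θ => ((⟪y, θ⟫ : ℝ) : EReal) - φ θ) x

lemma econj_eq_of_forall_add_inner_le (hφ : ∀ x, φ x ≠ ⊥) (hx : x ∈ edom φ)
    (hsub : ∀ z ∈ edom φ, fin φ x + ⟪y, z - x⟫ ≤ fin φ z) :
    econj φ y = ((⟪y, x⟫ - fin φ x : ℝ) : EReal) := by
  refine le_antisymm (iSup_le fun z => ?_) ?_
  · by_cases hz : z ∈ edom φ
    · rw [← coe_fin_of_mem_edom (hφ z) hz, ← EReal.coe_sub, EReal.coe_le_coe_iff]
      linarith [hsub z hz, inner_sub_right (𝕜 := ℝ) y z x]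
    · simp_all [edom]
  · simpa [coe_fin_of_mem_edom (hφ x) hx] using inner_sub_le_econj φ x y

lemma le_econj_add_econj (hg : ∀ x, g x ≠ ⊥) (hh : ∀ x, h x ≠ ⊥) (hxg : x ∈ edom g)
    (hxh : x ∈ edom h) (y : EuclideanSpace ℝ (Fin d)) :
    ((⟪v, x⟫ - fin g x - fin h x : ℝ) : EReal) ≤ econj g y + econj h (v - y) :=
  calc ((⟪v, x⟫ - fin g x - fin h x : ℝ) : EReal)
      = (((⟪y, x⟫ : ℝ) : EReal) - g x) + (((⟪v - y, x⟫ : ℝ) : EReal) - h x) := by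
        rw [← coe_fin_of_mem_edom (hg x) hxg, ← coe_fin_of_mem_edom (hh x) hxh, inner_sub_left]
        norm_cast
        ring
    _ ≤ econj g y + econj h (v - y) :=
        add_le_add (inner_sub_le_econj g x y) (inner_sub_le_econj h x (v - y))

lemma bregmanD_eq_coe (hh : h x ≠ ⊥) (hx : x ∈ edom h) (xbar : EuclideanSpace ℝ (Fin d)) :
    bregmanD h x xbar =
      ((fin h x - fin h xbar - ⟪gradient (fin h) xbar, x - xbar⟫ : ℝ) : EReal) := by
  rw [bregmanD, ← coe_fin_of_mem_edom hh hx]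
  rfl

lemma isMinOn_of_forall_add_bregmanD_le (hg : ∀ x, g x ≠ ⊥) (hh : ∀ x, h x ≠ ⊥)
    {xbar xplus : EuclideanSpace ℝ (Fin d)}
    (hmin : ∀ x, g xplus + bregmanD h xplus xbar ≤ g x + bregmanD h x xbar)
    (hxg : xplus ∈ edom g) (hxh : xplus ∈ edom h) :
    IsMinOn (fun z => fin g z + fin h z - ⟪gradient (fin h) xbar, z⟫) (edom g ∩ edom h) xplus := by
  rintro z ⟨hzg, hzh⟩
  have := hmin z
  rw [bregmanD_eq_coe (hh _) hxh, bregmanD_eq_coe (hh _) hzh, ← coe_fin_of_mem_edom (hg _) hxg,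
    ← coe_fin_of_mem_edom (hg _) hzg] at this
  norm_cast at this
  simp only [Set.mem_ofPred_eq, inner_sub_right] at this ⊢
  linarith

end Extended

theorem bregman_moreau_decomposition_general
    (h g : EuclideanSpace ℝ (Fin d) → EReal)
    (hh_prop : ∀ x, h x ≠ ⊥)
    (hh_conv : ∀ x y : EuclideanSpace ℝ (Fin d), ∀ a b : ℝ,
      0 ≤ a → 0 ≤ b → a + b = 1 →
        h (a • x + b • y) ≤ (a : EReal) * h x + (b : EReal) * h y)
    (hh_leg : LegendreType h)
    (hg_prop : (∀ x, g x ≠ ⊥) ∧ (edom g).Nonempty)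
    (hg_conv : ∀ x y : EuclideanSpace ℝ (Fin d), ∀ a b : ℝ,
      0 ≤ a → 0 ≤ b → a + b = 1 →
        g (a • x + b • y) ≤ (a : EReal) * g x + (b : EReal) * g y)
    (xbar : EuclideanSpace ℝ (Fin d))
    (xplus : EuclideanSpace ℝ (Fin d))
    (hmin : ∀ x, g xplus + bregmanD h xplus xbar ≤ g x + bregmanD h x xbar)
    (hmem : xplus ∈ interior (edom h) ∩ edom g) :
    ∃ yplus : EuclideanSpace ℝ (Fin d),
      (∀ y, econj g yplus + econj h (gradient (fin h) xbar - yplus) ≤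
        econj g y + econj h (gradient (fin h) xbar - y)) ∧
      gradient (fin h) xplus + yplus = gradient (fin h) xbar := by
  obtain ⟨hxplus_int, hxplus_g⟩ := hmem
  have hxplus_h : xplus ∈ edom h := interior_subset hxplus_int
  have hdiff : DifferentiableAt ℝ (fin h) xplus := hh_leg.1.2.1 xplus hxplus_int
  set v := gradient (fin h) xbar
  set w := gradient (fin h) xplus
  have hsub_h : ∀ z ∈ edom h, fin h xplus + ⟪w, z - xplus⟫ ≤ fin h z := fun z hz =>
    (convexOn_fin hh_prop hh_conv).add_inner_gradient_le hxplus_h hz hdiff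
  have hsub_g : ∀ z ∈ edom g, fin g xplus + ⟪v - w, z - xplus⟫ ≤ fin g z := fun z hz =>
    (convexOn_fin hg_prop.1 hg_conv).add_inner_le_of_isMinOn hdiff hxplus_g
      (mem_interior_iff_mem_nhds.mp hxplus_int)
      (isMinOn_of_forall_add_bregmanD_le hg_prop.1 hh_prop hmin hxplus_g hxplus_h) hz
  refine ⟨v - w, fun y => ?_, add_sub_cancel w v⟩
  rw [sub_sub_cancel, econj_eq_of_forall_add_inner_le hg_prop.1 hxplus_g hsub_g,
    econj_eq_of_forall_add_inner_le hh_prop hxplus_h hsub_h, ← EReal.coe_add, inner_sub_left]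
  calc ((⟪v, xplus⟫ - ⟪w, xplus⟫ - fin g xplus + (⟪w, xplus⟫ - fin h xplus) : ℝ) : EReal)
      = ((⟪v, xplus⟫ - fin g xplus - fin h xplus : ℝ) : EReal) := by congr 1; ring
    _ ≤ econj g y + econj h (v - y) :=
      le_econj_add_econj hg_prop.1 hh_prop hxplus_g hxplus_h y

/-- (Generalized Moreau decomposition.) If `x⁺` is the unique Bregman proximal
point of `g` at `x̄` and lies in `int dom h ∩ dom g`, then the dual
infimal-convolution problem `min_y g*(y) + h*(∇h(x̄) − y)` has a solution `y⁺`,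
and `∇h(x⁺) + y⁺ = ∇h(x̄)`. -/
theorem bregman_moreau_decomposition
    (h g : EuclideanSpace ℝ (Fin d) → EReal)
    (hh_prop : ∀ x, h x ≠ ⊥) (hh_closed : LowerSemicontinuous h)
    (hh_conv : ∀ x y : EuclideanSpace ℝ (Fin d), ∀ a b : ℝ,
      0 ≤ a → 0 ≤ b → a + b = 1 →
        h (a • x + b • y) ≤ (a : EReal) * h x + (b : EReal) * h y)
    (hh_leg : LegendreType h)
    (hg_prop : (∀ x, g x ≠ ⊥) ∧ (edom g).Nonempty)
    (hg_closed : LowerSemicontinuous g)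
    (hg_conv : ∀ x y : EuclideanSpace ℝ (Fin d), ∀ a b : ℝ,
      0 ≤ a → 0 ≤ b → a + b = 1 →
        g (a • x + b • y) ≤ (a : EReal) * g x + (b : EReal) * g y)
    (xbar : EuclideanSpace ℝ (Fin d)) (hxbar : xbar ∈ interior (edom h))
    (xplus : EuclideanSpace ℝ (Fin d))
    (hmin : ∀ x, g xplus + bregmanD h xplus xbar ≤ g x + bregmanD h x xbar)
    (huniq : ∀ x, (∀ z, g x + bregmanD h x xbar ≤ g z + bregmanD h z xbar) → x = xplus)
    (hmem : xplus ∈ interior (edom h) ∩ edom g) :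
    ∃ yplus : EuclideanSpace ℝ (Fin d),
      (∀ y, econj g yplus + econj h (gradient (fin h) xbar - yplus) ≤
        econj g y + econj h (gradient (fin h) xbar - y)) ∧
      gradient (fin h) xplus + yplus = gradient (fin h) xbar :=
  bregman_moreau_decomposition_general h g hh_prop hh_conv hh_leg hg_prop hg_conv xbar xplus hmin
    hmem
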